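/- For all integers n ≥ 2 and k ≥ 1, the number of isomorphism classes of initially-connected complete deterministic finite automata (with a designated set of final states) with n states over an alphabet of k symbols equals 2^n · B_{k,n}, where B_{k,n} is the number of strings (s_i)_{i∈[0,kn−1]} with s_i ∈ [0,n−1] satisfying rules (R1) and (R2). -/

import Mathlib

/-!
Number the states of an initially connected DFA so that the initial state is `0` and the
flattened transition table (the target of state `q` under letter `a` at position `k * q + a`) is
lexicographically least. This table satisfies (R1) by an exchange argument, and then (R2) because
the states below any label `m` cannot be closed under transitions. Conversely, an isomorphism
between two DFAs numbered in this way is the identity, so the isomorphism classes correspond to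
pairs of a table obeying (R1) and (R2) and a set of final states.
-/

/-- Rule (R1). -/
def RuleR1 (n k : ℕ) (s : Fin (k * n) → Fin n) : Prop :=
  ∀ m : ℕ, 2 ≤ m → m ≤ n - 1 → ∀ i : Fin (k * n), (s i : ℕ) = m →
    ∃ j : Fin (k * n), (j : ℕ) < (i : ℕ) ∧ (s j : ℕ) = m - 1

/-- Rule (R2). -/
def RuleR2 (n k : ℕ) (s : Fin (k * n) → Fin n) : Prop :=
  ∀ m : ℕ, 1 ≤ m → m ≤ n - 1 → ∃ j : Fin (k * n), (j : ℕ) < k * m ∧ (s j : ℕ) = m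

/-- A complete DFA with `n` states over a `k`-letter alphabet:  a transition
function, an initial state, and a set of final states. -/
structure DFAacc (n k : ℕ) where
  delta : Fin n → Fin k → Fin n
  q0 : Fin n
  final : Finset (Fin n)

/-- Extension of the transition function to words. -/
def deltaStar {n k : ℕ} (d : Fin n → Fin k → Fin n) : Fin n → List (Fin k) → Fin n
  | q, [] => q
  | q, a :: w => deltaStar d (d q a) w

/-- Initially connected: every state is reachable from the initial state. -/
def InitiallyConn {n k : ℕ} (A : DFAacc n k) : Prop :=
  ∀ q : Fin n, ∃ w : List (Fin k), deltaStar A.delta A.q0 w = q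

/-- Isomorphism of DFAs (respecting initial state, transitions, and final
states). -/
def IsIso {n k : ℕ} (A B : DFAacc n k) : Prop :=
  ∃ f : Fin n ≃ Fin n, f A.q0 = B.q0 ∧
    (∀ q σ, f (A.delta q σ) = B.delta (f q) σ) ∧
    ∀ q, q ∈ A.final ↔ f q ∈ B.final

namespace DFAacc

variable {n k : ℕ}

def cell : Fin n × Fin k ≃ Fin (k * n) :=
  finProdFinEquiv.trans (finCongr (Nat.mul_comm n k))

@[simp] lemma cell_val (x : Fin n × Fin k) : (cell x : ℕ) = x.2 + k * x.1 := rfl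

lemma cell_symm_fst_val (t : Fin (k * n)) : ((cell.symm t).1 : ℕ) = t / k := by
  simp [cell, finProdFinEquiv_symm_apply, Fin.divNat]

lemma cell_val_lt_mul {q : Fin n} {m : ℕ} (hq : (q : ℕ) < m) (a : Fin k) :
    (cell (q, a) : ℕ) < k * m := by
  rw [cell_val]
  nlinarith [a.isLt]

lemma cell_lt_of_fst_lt {q : Fin n} {t : Fin (k * n)} (hq : q < (cell.symm t).1) (a : Fin k) :
    cell (q, a) < t := by
  have := cell_val_lt_mul hq a
  rw [cell_symm_fst_val] at this
  exact Fin.lt_def.mpr (this.trans_le (Nat.mul_div_le _ _))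

lemma cell_symm_fst_mono {t t' : Fin (k * n)} (h : t ≤ t') :
    (cell.symm t).1 ≤ (cell.symm t').1 := by
  rw [Fin.le_def, cell_symm_fst_val, cell_symm_fst_val]
  exact Nat.div_le_div_right h

lemma cell_symm_fst_lt {t : Fin (k * n)} {m : ℕ} (h : (t : ℕ) < k * m) :
    ((cell.symm t).1 : ℕ) < m := by
  have hk : 0 < k := Nat.pos_of_mul_pos_right t.pos
  rw [cell_symm_fst_val, Nat.div_lt_iff_lt_mul hk]
  linarith

def table (A : DFAacc n k) (t : Fin (k * n)) : Fin n :=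
  A.delta (cell.symm t).1 (cell.symm t).2

@[simp] lemma table_cell (A : DFAacc n k) (q : Fin n) (a : Fin k) :
    A.table (cell (q, a)) = A.delta q a := by
  simp [table]

def ofTable [NeZero n] (s : Fin (k * n) → Fin n) (F : Finset (Fin n)) : DFAacc n k where
  delta q a := s (cell (q, a))
  q0 := 0
  final := F

@[simp] lemma table_ofTable [NeZero n] (s : Fin (k * n) → Fin n) (F : Finset (Fin n)) :
    (ofTable s F).table = s := by
  ext t; simp [table, ofTable]

lemma ofTable_table [NeZero n] {A : DFAacc n k} (h0 : (A.q0 : ℕ) = 0) :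
    ofTable A.table A.final = A := by
  obtain ⟨δ, q0, F⟩ := A
  simp only [ofTable, table_cell, mk.injEq, true_and, and_true]
  exact Fin.ext (Fin.val_zero n ▸ h0.symm)

def relabel (A : DFAacc n k) (f : Fin n ≃ Fin n) : DFAacc n k where
  delta q a := f (A.delta (f.symm q) a)
  q0 := f A.q0
  final := A.final.map f.toEmbedding

lemma relabel_relabel (A : DFAacc n k) (f g : Fin n ≃ Fin n) :
    (A.relabel f).relabel g = A.relabel (f.trans g) := by
  simp [relabel, Finset.map_map]

lemma table_relabel_apply (A : DFAacc n k) (f : Fin n ≃ Fin n) (t : Fin (k * n))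
    (ht : f (cell.symm t).1 = (cell.symm t).1) :
    (A.relabel f).table t = f (A.table t) := by
  simp [table, relabel, f.symm_apply_eq.mpr ht.symm]

lemma isIso_relabel (A : DFAacc n k) (f : Fin n ≃ Fin n) : IsIso A (A.relabel f) :=
  ⟨f, rfl, by simp [relabel], by simp [relabel]⟩

lemma deltaStar_append_singleton (d : Fin n → Fin k → Fin n) (q : Fin n) (w : List (Fin k))
    (a : Fin k) : deltaStar d q (w ++ [a]) = d (deltaStar d q w) a := by
  induction w generalizing q with
  | nil => rfl
  | cons b w ih => exact ih (d q b)

lemma initiallyConn_iff {A : DFAacc n k} :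
    InitiallyConn A ↔
      ∀ S : Set (Fin n), A.q0 ∈ S → (∀ q ∈ S, ∀ a, A.delta q a ∈ S) → ∀ q, q ∈ S := by
  constructor
  · intro hc S h0 hS q
    obtain ⟨w, rfl⟩ := hc q
    suffices ∀ q ∈ S, deltaStar A.delta q w ∈ S from this _ h0
    induction w with
    | nil => exact fun q hq => hq
    | cons a w ih => exact fun q hq => ih _ (hS q hq a)
  · intro h
    refine h {q | ∃ w, deltaStar A.delta A.q0 w = q} ⟨[], rfl⟩ ?_
    rintro _ ⟨w, rfl⟩ a
    exact ⟨w ++ [a], deltaStar_append_singleton _ _ _ _⟩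

lemma initiallyConn_relabel {A : DFAacc n k} (hc : InitiallyConn A) (f : Fin n ≃ Fin n) :
    InitiallyConn (A.relabel f) := by
  refine initiallyConn_iff.mpr fun S h0 hS q => ?_
  have := initiallyConn_iff.mp hc (f ⁻¹' S) h0 fun q hq a => by
    simpa [relabel] using hS _ hq a
  simpa using this (f.symm q)

lemma exists_lt_le_delta {A : DFAacc n k} (hc : InitiallyConn A) {m : ℕ}
    (h0 : (A.q0 : ℕ) < m) (hm : m < n) :
    ∃ q : Fin n, (q : ℕ) < m ∧ ∃ a, m ≤ (A.delta q a : ℕ) := by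
  by_contra! h
  have := initiallyConn_iff.mp hc {q | (q : ℕ) < m} h0 (fun q hq a => h q hq a) ⟨m, hm⟩
  simp at this

end DFAacc

section Strings

variable {N n k : ℕ}

lemma ruleR1_iff {s : Fin (k * n) → Fin n} :
    RuleR1 n k s ↔ ∀ i, 2 ≤ (s i : ℕ) → ∃ j < i, (s j : ℕ) + 1 = s i := by
  constructor
  · intro h i hi
    obtain ⟨j, hj, hsj⟩ := h _ hi (by omega) i rfl
    exact ⟨j, hj, by omega⟩
  · rintro h m hm _ i rfl
    obtain ⟨j, hj, hsj⟩ := h i hm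
    exact ⟨j, hj, by omega⟩

lemma exists_le_eq_of_forall_le {s : Fin N → Fin n} {i : Fin N}
    (h : ∀ t ≤ i, 2 ≤ (s t : ℕ) → ∃ j < t, (s j : ℕ) + 1 = s t)
    {m : ℕ} (hm : 1 ≤ m) (hmi : m ≤ s i) : ∃ j ≤ i, (s j : ℕ) = m := by
  obtain ⟨d, hd⟩ := Nat.exists_eq_add_of_le hmi
  induction d generalizing i with
  | zero => exact ⟨i, le_rfl, by omega⟩
  | succ d ih =>
    obtain ⟨j, hji, hj⟩ := h i le_rfl (by omega)
    obtain ⟨j', hj'j, hj'⟩ := ih (fun t ht => h t (ht.trans hji.le)) (by omega) (by omega)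
    exact ⟨j', hj'j.trans hji.le, hj'⟩

lemma RuleR1.exists_le_eq {s : Fin (k * n) → Fin n} (h : RuleR1 n k s) {i : Fin (k * n)}
    {m : ℕ} (hm : 1 ≤ m) (hmi : m ≤ s i) : ∃ j ≤ i, (s j : ℕ) = m :=
  exists_le_eq_of_forall_le (fun t _ => ruleR1_iff.mp h t) hm hmi

lemma RuleR1.exists_first_eq {s : Fin (k * n) → Fin n} (h1 : RuleR1 n k s) (h2 : RuleR2 n k s)
    {m : Fin n} (hm1 : 1 ≤ (m : ℕ)) :
    ∃ j : Fin (k * n), (j : ℕ) < k * m ∧ s j = m ∧ ∀ t < j, s t < m := by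
  obtain ⟨j₀, hj₀, hsj₀⟩ := h2 m hm1 (by omega)
  obtain ⟨j, hj, hmin⟩ := WellFounded.has_min wellFounded_lt {j | s j = m} ⟨j₀, Fin.ext hsj₀⟩
  refine ⟨j, lt_of_le_of_lt (not_lt.mp (hmin j₀ (Fin.ext hsj₀))) hj₀, hj, fun t ht => ?_⟩
  by_contra! hle
  obtain ⟨t', ht't, hst'⟩ := h1.exists_le_eq hm1 hle
  exact hmin t' (Fin.ext hst') (ht't.trans_lt ht)

end Strings

namespace DFAacc

variable {n k : ℕ}

lemma isIso_equivalence : Equivalence (@IsIso n k) where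
  refl A := ⟨Equiv.refl _, rfl, fun _ _ => rfl, fun _ => Iff.rfl⟩
  symm := by
    rintro A B ⟨f, h0, hδ, hF⟩
    refine ⟨f.symm, f.symm_apply_eq.mpr h0.symm, fun q a => ?_, fun q => ?_⟩
    · rw [f.symm_apply_eq, hδ, f.apply_symm_apply]
    · rw [hF, f.apply_symm_apply]
  trans := by
    rintro A B C ⟨f, h0, hδ, hF⟩ ⟨g, h0', hδ', hF'⟩
    exact ⟨f.trans g, by simp [h0, h0'], by simp [hδ, hδ'], fun q => (hF q).trans (hF' _)⟩

lemma ruleR2_table {A : DFAacc n k} (hc : InitiallyConn A) (h0 : (A.q0 : ℕ) = 0)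
    (h1 : RuleR1 n k A.table) : RuleR2 n k A.table := by
  intro m hm hmn
  obtain ⟨q, hq, a, hqa⟩ := exists_lt_le_delta hc (m := m) (by omega) (by omega)
  obtain ⟨j, hj, hjm⟩ := h1.exists_le_eq (i := cell (q, a)) hm (by simpa using hqa)
  exact ⟨j, (Fin.le_def.mp hj).trans_lt (cell_val_lt_mul hq a), hjm⟩

/-- At a first violation `s i = m` (no earlier `m - 1`), all entries before `i` are below `m - 1`,
hence by initial connectedness so are the rows up to `i`; swapping the labels `m - 1` and `m` then
leaves the table before `i` unchanged and lowers its entry at `i`. -/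
lemma ruleR1_table_of_minimal {A : DFAacc n k} (hc : InitiallyConn A) (h0 : (A.q0 : ℕ) = 0)
    (hmin : ∀ g : Fin n ≃ Fin n, g A.q0 = A.q0 → toLex A.table ≤ toLex (A.relabel g).table) :
    RuleR1 n k A.table := by
  rw [ruleR1_iff]
  intro i
  induction i using WellFoundedLT.induction with | _ i ih => ?_
  intro hi
  by_contra! hne
  set s := A.table with hs
  set m := (s i : ℕ)
  have hprefix : ∀ t < i, (s t : ℕ) + 2 ≤ m := by
    intro t ht
    by_contra! hlt
    obtain ⟨j, hjt, hj⟩ :=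
      exists_le_eq_of_forall_le (fun t' ht' => ih t' (ht'.trans_lt ht)) (m := m - 1) (by omega)
        (by omega)
    exact hne j (hjt.trans_lt ht) (by omega)
  have hrow : ((cell.symm i).1 : ℕ) + 2 ≤ m := by
    by_contra! hlt
    obtain ⟨q, hq, a, hqa⟩ := exists_lt_le_delta hc (m := m - 1) (by omega) (by omega)
    have := hprefix _ (cell_lt_of_fst_lt (q := q) (t := i) (Fin.lt_def.mpr (by omega)) a)
    rw [hs, table_cell] at this
    omega
  set σ := Equiv.swap (⟨m - 1, by omega⟩ : Fin n) (s i)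
  have hσ : ∀ q : Fin n, (q : ℕ) + 2 ≤ m → σ q = q := fun q hq =>
    Equiv.swap_apply_of_ne_of_ne (Fin.ne_of_val_ne (by simp; omega)) (Fin.ne_of_val_ne (by omega))
  have hrows : ∀ t ≤ i, (A.relabel σ).table t = σ (s t) := fun t ht =>
    table_relabel_apply A σ t (hσ _ (by have := Fin.le_def.mp (cell_symm_fst_mono ht); omega))
  refine (hmin σ (by rw [hσ _ (by omega)])).not_gt ⟨i, fun t ht => ?_, ?_⟩
  · change (A.relabel σ).table t = s t
    rw [hrows t ht.le, hσ _ (hprefix t ht)]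
  · change (A.relabel σ).table i < s i
    rw [hrows i le_rfl, Equiv.swap_apply_right]
    exact Fin.lt_def.mpr (by simp; omega)

def IsCanonical (A : DFAacc n k) : Prop :=
  (A.q0 : ℕ) = 0 ∧ RuleR1 n k A.table ∧ RuleR2 n k A.table

lemma exists_isIso_isCanonical {A : DFAacc n k} (hc : InitiallyConn A) :
    ∃ B, IsIso A B ∧ IsCanonical B := by
  obtain ⟨f, hf, hmin⟩ :=
    Finset.exists_min_image (Finset.univ.filter fun f : Fin n ≃ Fin n => (f A.q0 : ℕ) = 0)
      (fun f => toLex (A.relabel f).table) ⟨Equiv.swap A.q0 ⟨0, A.q0.pos⟩, by simp⟩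
  simp only [Finset.mem_filter, Finset.mem_univ, true_and] at hf hmin
  have hc' := initiallyConn_relabel hc f
  have hR1 : RuleR1 n k (A.relabel f).table := by
    refine ruleR1_table_of_minimal hc' hf fun g hg => ?_
    rw [relabel_relabel]
    exact hmin _ ((congrArg Fin.val hg).trans hf)
  exact ⟨A.relabel f, isIso_relabel A f, hf, hR1, ruleR2_table hc' hf hR1⟩

lemma IsCanonical.initiallyConn {A : DFAacc n k} (hA : IsCanonical A) : InitiallyConn A := by
  refine initiallyConn_iff.mpr fun S h0 hS q => ?_
  induction q using WellFoundedLT.induction with | _ q ih => ?_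
  rcases Nat.eq_zero_or_pos q with hq | hq
  · rwa [show q = A.q0 from Fin.ext (hq.trans hA.1.symm)]
  · obtain ⟨j, hjq, hj⟩ := hA.2.2 q hq (by omega)
    have : A.table j ∈ S := hS _ (ih _ (Fin.lt_def.mpr (cell_symm_fst_lt hjq))) _
    rwa [Fin.ext hj] at this

/-- By induction on `q`: the first occurrence of `q` in the table of `A` lies in a row fixed by
`f`; before it both tables agree and stay below `q`, so by rule (R1) for `B` the entry `f q` there
cannot exceed `q`. -/
lemma IsCanonical.apply_eq_self {A B : DFAacc n k} (hA : IsCanonical A) (hB : IsCanonical B)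
    {f : Fin n ≃ Fin n} (h0 : f A.q0 = B.q0) (hδ : ∀ q a, f (A.delta q a) = B.delta (f q) a)
    (q : Fin n) : f q = q := by
  induction q using WellFoundedLT.induction with | _ q ih => ?_
  rcases Nat.eq_zero_or_pos q with hq | hq
  · rw [show q = A.q0 from Fin.ext (hq.trans hA.1.symm), h0]
    exact Fin.ext (hB.1.trans hA.1.symm)
  obtain ⟨j, hjq, hj, hbefore⟩ := hA.2.1.exists_first_eq hA.2.2 hq
  have htable : ∀ t ≤ j, f (A.table t) = B.table t := fun t ht => by
    have hrow : f (cell.symm t).1 = (cell.symm t).1 :=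
      ih _ ((cell_symm_fst_mono ht).trans_lt (Fin.lt_def.mpr (cell_symm_fst_lt hjq)))
    simp only [table]
    rw [hδ, hrow]
  have hge : q ≤ f q := by
    by_contra! hlt
    exact hlt.ne (f.injective (ih _ hlt))
  by_contra hne
  obtain ⟨t, htj, ht⟩ := hB.2.1.exists_le_eq (i := j) (m := q) hq
    (by rw [← htable j le_rfl, hj]; exact hge)
  rcases htj.lt_or_eq with htj | rfl
  · rw [← htable t htj.le, ih _ (hbefore t htj)] at ht
    exact (hbefore t htj).ne (Fin.ext ht)
  · rw [← htable t le_rfl, hj] at ht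
    exact hne (Fin.ext ht)

lemma IsCanonical.eq_of_isIso {A B : DFAacc n k} (hA : IsCanonical A) (hB : IsCanonical B)
    (h : IsIso A B) : A = B := by
  obtain ⟨f, h0, hδ, hF⟩ := h
  have hf := hA.apply_eq_self hB h0 hδ
  obtain ⟨δA, q0A, FA⟩ := A
  obtain ⟨δB, q0B, FB⟩ := B
  simp only [hf] at h0 hδ hF
  simp only [mk.injEq]
  exact ⟨funext fun q => funext (hδ q), h0, Finset.ext hF⟩

lemma card_quot_isIso :
    Nat.card (Quot fun A B : {A : DFAacc n k // InitiallyConn A} => IsIso A.1 B.1) =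
      Nat.card {A : DFAacc n k // IsCanonical A} := by
  refine (Nat.card_eq_of_bijective (fun A => Quot.mk _ ⟨A.1, A.2.initiallyConn⟩) ⟨?_, ?_⟩).symm
  · intro A B h
    have := (isIso_equivalence.comap Subtype.val).eqvGen_iff.mp (Quot.eqvGen_exact h)
    exact Subtype.ext (A.2.eq_of_isIso B.2 this)
  · rintro ⟨A, hA⟩
    obtain ⟨B, hAB, hB⟩ := exists_isIso_isCanonical hA
    exact ⟨⟨B, hB⟩, Quot.sound (isIso_equivalence.symm hAB)⟩

def isCanonicalEquiv [NeZero n] :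
    {A : DFAacc n k // IsCanonical A} ≃
      {s : Fin (k * n) → Fin n // RuleR1 n k s ∧ RuleR2 n k s} × Finset (Fin n) where
  toFun A := (⟨A.1.table, A.2.2⟩, A.1.final)
  invFun p := ⟨ofTable p.1.1 p.2, Fin.val_zero n, by simpa using p.1.2⟩
  left_inv A := Subtype.ext (ofTable_table A.2.1)
  right_inv p := Prod.ext (Subtype.ext (table_ofTable p.1.1 p.2)) rfl

end DFAacc

theorem stmt13_general (n k : ℕ) (hn : 2 ≤ n) :
    Nat.card
      (Quot (fun A B : {A : DFAacc n k // InitiallyConn A} => IsIso A.1 B.1)) =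
      2 ^ n * Nat.card {s : Fin (k * n) → Fin n // RuleR1 n k s ∧ RuleR2 n k s} := by
  have : NeZero n := ⟨by omega⟩
  rw [DFAacc.card_quot_isIso, Nat.card_congr DFAacc.isCanonicalEquiv, Nat.card_prod,
    Nat.card_eq_fintype_card (α := Finset (Fin n)), Fintype.card_finset, Fintype.card_fin, mul_comm]

/-- The number of isomorphism classes of initially-connected complete DFAs
(with final states) with `n` states over a `k`-letter alphabet equals
`2^n · B_{k,n}`, where `B_{k,n}` is the number of strings satisfying rules
(R1) and (R2). -/
theorem stmt13 (n k : ℕ) (hn : 2 ≤ n) (hk : 1 ≤ k) :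
    Nat.card
      (Quot (fun A B : {A : DFAacc n k // InitiallyConn A} => IsIso A.1 B.1)) =
      2 ^ n * Nat.card {s : Fin (k * n) → Fin n // RuleR1 n k s ∧ RuleR2 n k s} :=
  stmt13_general n k hn
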